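/- arXiv:1304.1693 — 3 statements merged into one kernel-verified Lean document; each statement's English description precedes it below -/
import Mathlib

section
/- For all j ∈ ℤ and t ≥ 0, the time derivative of the discrete heat kernel satisfies |ġ_j(t)| ≤ -ġ_0(t), and there is a constant C with -ġ_0(t) ≤ C (1+t)^{-3/2}. -/
open Real MeasureTheory intervalIntegral

/-- The discrete heat kernel on ℤ, via its Fourier representation. -/
noncomputable def heatKernel (j : ℤ) (t : ℝ) : ℝ :=
  (1 / (2 * Real.pi)) *
    ∫ k in (-Real.pi)..Real.pi, Real.exp (-(2 * (1 - Real.cos k)) * t) * Real.cos (j * k)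

/-! Differentiating under the integral sign gives
`-ġ_j(t) = (1/2π) ∫_{-π}^{π} ρ(k) e^{-ρ(k) t} cos(jk) dk`,
so `|cos| ≤ 1` yields `|ġ_j| ≤ -ġ_0`. On `[-π, π]` we have `4k²/π² ≤ ρ(k) ≤ k²`,
hence `ρ e^{-ρt} ≤ e⁴ k² e^{-a k²}` with `a = 4(1+t)/π²`, and the Gaussian moment
`∫_ℝ k² e^{-a k²} dk = Γ(3/2) a^{-3/2}` gives the `(1+t)^{-3/2}` decay. -/

/-- The Fourier symbol `ρ(k) = 2 (1 - cos k)` of `-Δ` on `ℤ`. -/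
noncomputable def laplacianSymbol (k : ℝ) : ℝ := 2 * (1 - cos k)

@[fun_prop]
lemma continuous_laplacianSymbol : Continuous laplacianSymbol := by
  unfold laplacianSymbol; fun_prop

lemma laplacianSymbol_nonneg (k : ℝ) : 0 ≤ laplacianSymbol k := by
  unfold laplacianSymbol; linarith [cos_le_one k]

lemma laplacianSymbol_le_four (k : ℝ) : laplacianSymbol k ≤ 4 := by
  unfold laplacianSymbol; linarith [neg_one_le_cos k]

lemma laplacianSymbol_le_sq (k : ℝ) : laplacianSymbol k ≤ k ^ 2 := by
  unfold laplacianSymbol; linarith [one_sub_sq_div_two_le_cos (x := k)]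

lemma mul_sq_le_laplacianSymbol {k : ℝ} (hk : |k| ≤ π) :
    4 / π ^ 2 * k ^ 2 ≤ laplacianSymbol k := by
  have := cos_le_one_sub_mul_cos_sq hk
  unfold laplacianSymbol; linarith [show 4 / π ^ 2 * k ^ 2 = 2 * (2 / π ^ 2 * k ^ 2) by ring]

theorem hasDerivAt_intervalIntegral_exp_neg_mul {φ ψ : ℝ → ℝ} (hφ : Continuous φ)
    (hψ : Continuous ψ) (a b t : ℝ) :
    HasDerivAt (fun s => ∫ k in a..b, exp (-φ k * s) * ψ k)
      (∫ k in a..b, -φ k * exp (-φ k * t) * ψ k) t := by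
  refine (intervalIntegral.hasDerivAt_integral_of_dominated_loc_of_deriv_le
    (F' := fun s k => -φ k * exp (-φ k * s) * ψ k)
    (bound := fun k => |φ k| * exp (|φ k| * (|t| + 1)) * |ψ k|)
    (Metric.ball_mem_nhds t one_pos) (.of_forall fun _ => by fun_prop)
    ((by fun_prop : Continuous _).intervalIntegrable _ _) (by fun_prop) ?_
    ((by fun_prop : Continuous _).intervalIntegrable _ _) ?_).2
  · refine .of_forall fun k _ s hs => ?_
    have hs' : |s| ≤ |t| + 1 := by
      have := abs_sub_abs_le_abs_sub s t
      rw [Metric.mem_ball, Real.dist_eq] at hs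
      linarith
    have hexp : -φ k * s ≤ |φ k| * (|t| + 1) := calc
      -φ k * s ≤ |φ k| * |s| := by rw [neg_mul, ← abs_mul]; exact neg_le_abs _
      _ ≤ |φ k| * (|t| + 1) := by gcongr
    rw [Real.norm_eq_abs, abs_mul, abs_mul, abs_neg, abs_exp]
    gcongr
  · refine .of_forall fun k _ s _ => ?_
    have := ((hasDerivAt_id s).const_mul (-φ k)).exp.mul_const (ψ k)
    simpa [mul_comm] using this

lemma hasDerivAt_heatKernel (j : ℤ) (t : ℝ) :
    HasDerivAt (heatKernel j) (1 / (2 * π) *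
      ∫ k in -π..π, -laplacianSymbol k * exp (-laplacianSymbol k * t) * cos (j * k)) t :=
  (hasDerivAt_intervalIntegral_exp_neg_mul (ψ := fun k => cos (j * k))
    continuous_laplacianSymbol (by fun_prop) (-π) π t).const_mul _

lemma neg_deriv_heatKernel_zero (t : ℝ) :
    -deriv (heatKernel 0) t =
      1 / (2 * π) * ∫ k in -π..π, laplacianSymbol k * exp (-laplacianSymbol k * t) := by
  simp [(hasDerivAt_heatKernel 0 t).deriv, intervalIntegral.integral_neg]

theorem abs_deriv_heatKernel_le (j : ℤ) (t : ℝ) :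
    |deriv (heatKernel j) t| ≤ -deriv (heatKernel 0) t := by
  rw [(hasDerivAt_heatKernel j t).deriv, neg_deriv_heatKernel_zero, abs_mul,
    abs_of_pos (by positivity)]
  have hπ : -π ≤ π := by linarith [pi_pos]
  gcongr
  refine (abs_integral_le_integral_abs hπ).trans (integral_mono_on hπ
    ((by fun_prop : Continuous _).intervalIntegrable _ _)
    ((continuous_laplacianSymbol.mul (by fun_prop)).intervalIntegrable _ _) fun k _ => ?_)
  have hρ := laplacianSymbol_nonneg k
  rw [abs_mul, abs_mul, abs_neg, abs_of_nonneg hρ, abs_exp]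
  exact mul_le_of_le_one_right (by positivity) (abs_cos_le_one _)

lemma laplacianSymbol_mul_exp_le {k t : ℝ} (hk : |k| ≤ π) (ht : -1 ≤ t) :
    laplacianSymbol k * exp (-laplacianSymbol k * t) ≤
      exp 4 * (k ^ 2 * exp (-(4 / π ^ 2 * (1 + t)) * k ^ 2)) := by
  have hρ := laplacianSymbol_nonneg k
  -- `e^{-ρ t} = e^{ρ} e^{-ρ (1 + t)}` trades the lack of decay at `t = 0` for the factor `e⁴`.
  have hsplit : exp (-laplacianSymbol k * t) =
      exp (laplacianSymbol k) * exp (-laplacianSymbol k * (1 + t)) := by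
    rw [← exp_add]; ring_nf
  have hdecay : -laplacianSymbol k * (1 + t) ≤ -(4 / π ^ 2 * (1 + t)) * k ^ 2 := by
    nlinarith [mul_sq_le_laplacianSymbol hk]
  rw [hsplit]
  calc laplacianSymbol k * (exp (laplacianSymbol k) * exp (-laplacianSymbol k * (1 + t)))
      ≤ k ^ 2 * (exp 4 * exp (-(4 / π ^ 2 * (1 + t)) * k ^ 2)) := by
        gcongr
        · exact laplacianSymbol_le_sq k
        · exact laplacianSymbol_le_four k
    _ = exp 4 * (k ^ 2 * exp (-(4 / π ^ 2 * (1 + t)) * k ^ 2)) := by ring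

lemma integral_sq_mul_exp_neg_mul_sq {a : ℝ} (ha : 0 < a) :
    ∫ k : ℝ, k ^ 2 * exp (-a * k ^ 2) = a ^ (-(3 / 2) : ℝ) * Gamma (3 / 2) := by
  have hhalf := integral_rpow_mul_exp_neg_mul_rpow (p := 2) (q := 2) two_pos (by norm_num) ha
  have heven := integral_comp_abs (f := fun x => x ^ (2 : ℝ) * exp (-a * x ^ (2 : ℝ)))
  simp only [rpow_two, sq_abs] at hhalf heven
  rw [heven, hhalf]
  norm_num
  ring

lemma neg_deriv_heatKernel_zero_le {t : ℝ} (ht : -1 < t) :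
    -deriv (heatKernel 0) t ≤
      exp 4 / (2 * π) * Gamma (3 / 2) * (4 / π ^ 2 * (1 + t)) ^ (-(3 / 2) : ℝ) := by
  have ha : 0 < 4 / π ^ 2 * (1 + t) := mul_pos (by positivity) (by linarith)
  set a := 4 / π ^ 2 * (1 + t)
  have hπ : -π ≤ π := by linarith [pi_pos]
  have hgauss : Integrable fun k : ℝ => k ^ 2 * exp (-a * k ^ 2) := by
    simpa [rpow_two] using integrable_rpow_mul_exp_neg_mul_sq ha (s := 2) (by norm_num)
  rw [neg_deriv_heatKernel_zero]
  calc 1 / (2 * π) * ∫ k in -π..π, laplacianSymbol k * exp (-laplacianSymbol k * t)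
      ≤ 1 / (2 * π) * ∫ k in -π..π, exp 4 * (k ^ 2 * exp (-a * k ^ 2)) := by
        gcongr
        exact integral_mono_on hπ
          ((continuous_laplacianSymbol.mul (by fun_prop)).intervalIntegrable _ _)
          ((by fun_prop : Continuous _).intervalIntegrable _ _)
          fun k hk => laplacianSymbol_mul_exp_le (abs_le.2 hk) ht.le
    _ ≤ 1 / (2 * π) * (exp 4 * ∫ k : ℝ, k ^ 2 * exp (-a * k ^ 2)) := by
        rw [intervalIntegral.integral_const_mul, integral_of_le hπ]
        gcongr 1 / (2 * π) * (exp 4 * ?_)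
        exact setIntegral_le_integral hgauss (.of_forall fun k => by positivity)
    _ = _ := by rw [integral_sq_mul_exp_neg_mul_sq ha]; ring

theorem heatKernel_time_derivative_bounds :
    (∀ (j : ℤ) (t : ℝ), 0 ≤ t →
      |deriv (heatKernel j) t| ≤ -deriv (heatKernel 0) t) ∧
    (∃ C : ℝ, 0 < C ∧ ∀ t : ℝ, 0 ≤ t →
      -deriv (heatKernel 0) t ≤ C * (1 + t) ^ (-(3 / 2) : ℝ)) := by
  refine ⟨fun j t _ => abs_deriv_heatKernel_le j t, ?_⟩
  refine ⟨exp 4 / (2 * π) * Gamma (3 / 2) * (4 / π ^ 2) ^ (-(3 / 2) : ℝ),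
    by have := Gamma_pos_of_pos (by norm_num : (0 : ℝ) < 3 / 2); positivity, fun t ht => ?_⟩
  calc -deriv (heatKernel 0) t
      ≤ exp 4 / (2 * π) * Gamma (3 / 2) * (4 / π ^ 2 * (1 + t)) ^ (-(3 / 2) : ℝ) :=
        neg_deriv_heatKernel_zero_le (by linarith)
    _ = _ := by rw [mul_rpow (by positivity) (by linarith)]; ring
end

section
/- Spatial Hölder estimate for the discrete heat kernel: there exists a constant C such that |g_{j_2}(t) - g_{j_1}(t)| ≤ C (1+t)^{-3/4} |j_2 - j_1|^{1/2} for all j_1, j_2 ∈ ℤ and all t > 0. -/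
open Real MeasureTheory intervalIntegral

namespace HKaux

noncomputable def E (t k : ℝ) : ℝ := Real.exp (-(2 * (1 - Real.cos k)) * t)

lemma E_cont (t : ℝ) : Continuous fun k => E t k := by
  unfold E; fun_prop

lemma E_pos (t k : ℝ) : 0 < E t k := Real.exp_pos _

lemma E_le_one {t : ℝ} (ht : 0 ≤ t) (k : ℝ) : E t k ≤ 1 := by
  rw [E, Real.exp_le_one_iff]
  have h := Real.cos_le_one k
  nlinarith

lemma f_cont (t : ℝ) : Continuous fun k => E t k * Real.sqrt |k| :=
  (E_cont t).mul (Real.continuous_sqrt.comp continuous_abs)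

lemma abs_cos_sub_cos_le (a b : ℝ) :
    |Real.cos a - Real.cos b| ≤ Real.sqrt 2 * Real.sqrt |a - b| := by
  have h1 : |Real.cos a - Real.cos b| ≤ |a - b| := by
    rw [Real.cos_sub_cos, abs_mul, abs_mul]
    have hs1 := Real.abs_sin_le_one ((a + b) / 2)
    have hs2 := Real.abs_sin_le_abs (x := (a - b) / 2)
    rw [abs_div] at hs2
    have h2 : |(-2 : ℝ)| = 2 := by norm_num
    have h3 : |(2 : ℝ)| = 2 := by norm_num
    rw [h2]
    rw [h3] at hs2
    nlinarith [abs_nonneg (Real.sin ((a - b) / 2)), abs_nonneg (Real.sin ((a + b) / 2)),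
      abs_nonneg (a - b)]
  rcases le_or_gt (|a - b|) 2 with h | h
  · calc |Real.cos a - Real.cos b| ≤ |a - b| := h1
      _ = Real.sqrt |a - b| * Real.sqrt |a - b| := (Real.mul_self_sqrt (abs_nonneg _)).symm
      _ ≤ Real.sqrt 2 * Real.sqrt |a - b| :=
        mul_le_mul_of_nonneg_right (Real.sqrt_le_sqrt h) (Real.sqrt_nonneg _)
  · have h2 : |Real.cos a - Real.cos b| ≤ 2 := by
      calc |Real.cos a - Real.cos b| ≤ |Real.cos a| + |Real.cos b| := abs_sub _ _
        _ ≤ 2 := by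
          have := Real.abs_cos_le_one a; have := Real.abs_cos_le_one b; linarith
    calc |Real.cos a - Real.cos b| ≤ 2 := h2
      _ = Real.sqrt 2 * Real.sqrt 2 := (Real.mul_self_sqrt (by norm_num)).symm
      _ ≤ Real.sqrt 2 * Real.sqrt |a - b| :=
        mul_le_mul_of_nonneg_left (Real.sqrt_le_sqrt h.le) (Real.sqrt_nonneg _)

lemma sqrt_integral {s : ℝ} (hs : 0 ≤ s) :
    ∫ k in (0:ℝ)..s, Real.sqrt |k| = 2 / 3 * s ^ ((3:ℝ)/2) := by
  rw [intervalIntegral.integral_congr (g := fun k => k ^ ((1:ℝ)/2))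
    (by
      intro x hx
      rw [Set.uIcc_of_le hs] at hx
      show Real.sqrt |x| = x ^ ((1:ℝ)/2)
      rw [abs_of_nonneg hx.1, Real.sqrt_eq_rpow]),
    integral_rpow (Or.inl (by norm_num))]
  rw [show (1:ℝ)/2 + 1 = (3:ℝ)/2 by norm_num, Real.zero_rpow (by norm_num)]
  ring

lemma key {t : ℝ} (ht : 0 < t) :
    ∫ k in (0:ℝ)..Real.pi, E t k * Real.sqrt |k| ≤ 20 * (1 + t) ^ (-(3/4) : ℝ) := by
  have hint : ∀ a b : ℝ, IntervalIntegrable (fun k => E t k * Real.sqrt |k|) volume a b :=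
    fun a b => (f_cont t).intervalIntegrable a b
  have hsq : ∀ a b : ℝ, IntervalIntegrable (fun k => Real.sqrt |k|) volume a b :=
    fun a b => (Real.continuous_sqrt.comp continuous_abs).intervalIntegrable a b
  have hmono : ∀ s : ℝ, 0 ≤ s →
      ∫ k in (0:ℝ)..s, E t k * Real.sqrt |k| ≤ 2 / 3 * s ^ ((3:ℝ)/2) := by
    intro s hs
    rw [← sqrt_integral hs]
    refine intervalIntegral.integral_mono_on hs (hint 0 s) (hsq 0 s) ?_
    intro x _
    have := E_le_one ht.le x
    nlinarith [Real.sqrt_nonneg |x|, (E_pos t x).le]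
  rcases le_or_gt t 1 with h1 | h1
  · -- small time
    have hb : ∫ k in (0:ℝ)..Real.pi, E t k * Real.sqrt |k| ≤ 2/3 * Real.pi ^ ((3:ℝ)/2) :=
      hmono _ Real.pi_pos.le
    have hpi : Real.pi ^ ((3:ℝ)/2) ≤ 8 := by
      calc Real.pi ^ ((3:ℝ)/2) ≤ (4:ℝ) ^ ((3:ℝ)/2) :=
            Real.rpow_le_rpow Real.pi_pos.le (by linarith [Real.pi_le_four]) (by norm_num)
        _ = 8 := by
            rw [show (4:ℝ) = 2 ^ (2:ℝ) by
              rw [show (2:ℝ) = ((2:ℕ):ℝ) by norm_num, Real.rpow_natCast]; norm_num,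
              ← Real.rpow_mul (by norm_num)]
            rw [show (2:ℝ) * ((3:ℝ)/2) = ((3:ℕ):ℝ) by norm_num, Real.rpow_natCast]
            norm_num
    have hrhs : (10:ℝ) ≤ 20 * (1 + t) ^ (-(3/4) : ℝ) := by
      have h2 : ((2:ℝ)) ^ (-(3/4) : ℝ) ≤ (1 + t) ^ (-(3/4) : ℝ) :=
        Real.rpow_le_rpow_of_nonpos (by linarith) (by linarith) (by norm_num)
      have h3 : ((2:ℝ)) ^ (-(1:ℝ)) ≤ (2:ℝ) ^ (-(3/4) : ℝ) :=
        Real.rpow_le_rpow_of_exponent_le (by norm_num) (by norm_num)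
      rw [Real.rpow_neg_one] at h3
      nlinarith
    calc ∫ k in (0:ℝ)..Real.pi, E t k * Real.sqrt |k| ≤ 2/3 * Real.pi ^ ((3:ℝ)/2) := hb
      _ ≤ 10 := by nlinarith
      _ ≤ 20 * (1 + t) ^ (-(3/4) : ℝ) := hrhs
  · -- large time: split at s = t^{-1/2}
    set s : ℝ := t ^ (-(1:ℝ)/2) with hs_def
    have hs_pos : 0 < s := Real.rpow_pos_of_pos ht _
    have hs_le_one : s ≤ 1 :=
      Real.rpow_le_one_of_one_le_of_nonpos h1.le (by norm_num)
    have hs_le_pi : s ≤ Real.pi := hs_le_one.trans (by linarith [Real.pi_gt_three])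
    have hsplit : ∫ k in (0:ℝ)..Real.pi, E t k * Real.sqrt |k|
        = (∫ k in (0:ℝ)..s, E t k * Real.sqrt |k|)
          + ∫ k in s..Real.pi, E t k * Real.sqrt |k| :=
      (intervalIntegral.integral_add_adjacent_intervals (hint 0 s) (hint s Real.pi)).symm
    -- part 1
    have hpart1 : ∫ k in (0:ℝ)..s, E t k * Real.sqrt |k| ≤ 2/3 * t ^ (-(3:ℝ)/4) := by
      have h := hmono s hs_pos.le
      have hsr : s ^ ((3:ℝ)/2) = t ^ (-(3:ℝ)/4) := by
        rw [hs_def, ← Real.rpow_mul ht.le]; norm_num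
      rwa [hsr] at h
    -- part 2
    have hpart2 : ∫ k in s..Real.pi, E t k * Real.sqrt |k|
        ≤ Real.pi ^ 2 / (4 * t) * (2 * t ^ ((1:ℝ)/4)) := by
      have hpw : ∀ x ∈ Set.Icc s Real.pi,
          E t x * Real.sqrt |x| ≤ Real.pi ^ 2 / (4 * t) * x ^ (-(3:ℝ)/2) := by
        intro x hx
        have hx0 : 0 < x := lt_of_lt_of_le hs_pos hx.1
        have hxpi : |x| ≤ Real.pi := by rw [abs_of_pos hx0]; exact hx.2
        have hcos : 2 / Real.pi ^ 2 * x ^ 2 ≤ 1 - Real.cos x := by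
          have := Real.cos_le_one_sub_mul_cos_sq hxpi
          linarith
        have hpi2 : (0:ℝ) < Real.pi ^ 2 := by positivity
        have hXpos : 0 < 4 * x ^ 2 * t / Real.pi ^ 2 := by positivity
        have hE : E t x ≤ Real.pi ^ 2 / (4 * x ^ 2 * t) := by
          have h1' : E t x ≤ Real.exp (-(4 * x ^ 2 * t / Real.pi ^ 2)) := by
            rw [E, Real.exp_le_exp]
            have hkey : 4 * x ^ 2 * t / Real.pi ^ 2 = 2 * (2 / Real.pi ^ 2 * x ^ 2) * t := by
              ring
            rw [hkey]
            nlinarith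
          have h2' : Real.exp (-(4 * x ^ 2 * t / Real.pi ^ 2))
              ≤ (4 * x ^ 2 * t / Real.pi ^ 2)⁻¹ := by
            rw [Real.exp_neg]
            apply inv_anti₀ hXpos
            linarith [Real.add_one_le_exp (4 * x ^ 2 * t / Real.pi ^ 2)]
          calc E t x ≤ (4 * x ^ 2 * t / Real.pi ^ 2)⁻¹ := h1'.trans h2'
            _ = Real.pi ^ 2 / (4 * x ^ 2 * t) := by rw [inv_div]
        have hxr : x ^ (-(3:ℝ)/2) = Real.sqrt x / x ^ 2 := by
          rw [Real.sqrt_eq_rpow, show (-(3:ℝ)/2) = (1:ℝ)/2 + (-2:ℝ) by norm_num,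
            Real.rpow_add hx0, Real.rpow_neg hx0.le,
            show ((2:ℝ)) = ((2:ℕ):ℝ) by norm_num, Real.rpow_natCast]
          ring
        rw [abs_of_pos hx0, hxr]
        have hsqn : 0 ≤ Real.sqrt x := Real.sqrt_nonneg x
        calc E t x * Real.sqrt x ≤ Real.pi ^ 2 / (4 * x ^ 2 * t) * Real.sqrt x :=
              mul_le_mul_of_nonneg_right hE hsqn
          _ = Real.pi ^ 2 / (4 * t) * (Real.sqrt x / x ^ 2) := by
              field_simp
      have hintr : IntervalIntegrable (fun x : ℝ => Real.pi ^ 2 / (4 * t) * x ^ (-(3:ℝ)/2))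
          volume s Real.pi := by
        apply ContinuousOn.intervalIntegrable
        apply ContinuousOn.mul continuousOn_const
        intro x hx
        rw [Set.uIcc_of_le hs_le_pi] at hx
        exact (Real.continuousAt_rpow_const x _
          (Or.inl (ne_of_gt (lt_of_lt_of_le hs_pos hx.1)))).continuousWithinAt
      have h1' : ∫ k in s..Real.pi, E t k * Real.sqrt |k|
          ≤ ∫ k in s..Real.pi, Real.pi ^ 2 / (4 * t) * k ^ (-(3:ℝ)/2) :=
        intervalIntegral.integral_mono_on hs_le_pi (hint s Real.pi) hintr hpw
      have h2' : ∫ k in s..Real.pi, Real.pi ^ 2 / (4 * t) * k ^ (-(3:ℝ)/2)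
          = Real.pi ^ 2 / (4 * t) * ∫ k in s..Real.pi, k ^ (-(3:ℝ)/2) :=
        intervalIntegral.integral_const_mul _ _
      have hs14 : s ^ (-(1:ℝ)/2) = t ^ ((1:ℝ)/4) := by
        rw [hs_def, ← Real.rpow_mul ht.le]; norm_num
      have h3' : ∫ k in s..Real.pi, k ^ (-(3:ℝ)/2) ≤ 2 * t ^ ((1:ℝ)/4) := by
        rw [integral_rpow (Or.inr ⟨by norm_num, by
          rw [Set.uIcc_of_le hs_le_pi]
          intro hc
          exact absurd hc.1 (not_le.mpr hs_pos)⟩)]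
        rw [show (-(3:ℝ)/2 + 1) = (-(1:ℝ)/2) by norm_num, hs14]
        have hpi14 : 0 ≤ Real.pi ^ (-(1:ℝ)/2) := (Real.rpow_pos_of_pos Real.pi_pos _).le
        have hid : (Real.pi ^ (-(1:ℝ)/2) - t ^ ((1:ℝ)/4)) / (-(1:ℝ)/2)
            = 2 * t ^ ((1:ℝ)/4) - 2 * Real.pi ^ (-(1:ℝ)/2) := by ring
        rw [hid]
        have ht14 : 0 ≤ t ^ ((1:ℝ)/4) := (Real.rpow_pos_of_pos ht _).le
        linarith
      calc ∫ k in s..Real.pi, E t k * Real.sqrt |k|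
          ≤ Real.pi ^ 2 / (4 * t) * ∫ k in s..Real.pi, k ^ (-(3:ℝ)/2) := by
            rw [← h2']; exact h1'
        _ ≤ Real.pi ^ 2 / (4 * t) * (2 * t ^ ((1:ℝ)/4)) :=
            mul_le_mul_of_nonneg_left h3' (by positivity)
    -- combine
    have hmul : Real.pi ^ 2 / (4 * t) * (2 * t ^ ((1:ℝ)/4)) = Real.pi ^ 2 / 2 * t ^ (-(3:ℝ)/4) := by
      have h4 : t ^ (-(3:ℝ)/4) = t⁻¹ * t ^ ((1:ℝ)/4) := by
        rw [← Real.rpow_neg_one t, ← Real.rpow_add ht]; norm_num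
      rw [h4]
      field_simp
      ring
    have hbound : ∫ k in (0:ℝ)..Real.pi, E t k * Real.sqrt |k| ≤ 9 * t ^ (-(3:ℝ)/4) := by
      rw [hsplit]
      have hpisq : Real.pi ^ 2 ≤ 16 := by nlinarith [Real.pi_le_four, Real.pi_pos]
      have ht34 : 0 ≤ t ^ (-(3:ℝ)/4) := (Real.rpow_pos_of_pos ht _).le
      rw [hmul] at hpart2
      nlinarith
    have hcomp : t ^ (-(3:ℝ)/4) ≤ 2 * (1 + t) ^ (-(3/4) : ℝ) := by
      have ha : (2 * t) ^ (-(3:ℝ)/4) ≤ (1 + t) ^ (-(3:ℝ)/4) :=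
        Real.rpow_le_rpow_of_nonpos (by linarith) (by linarith) (by norm_num)
      have hb : (2 * t) ^ (-(3:ℝ)/4) = 2 ^ (-(3:ℝ)/4) * t ^ (-(3:ℝ)/4) :=
        Real.mul_rpow (by norm_num) ht.le
      have hc : ((2:ℝ)) ^ (-(1:ℝ)) ≤ (2:ℝ) ^ (-(3:ℝ)/4) :=
        Real.rpow_le_rpow_of_exponent_le (by norm_num) (by norm_num)
      rw [Real.rpow_neg_one] at hc
      have ht34 : 0 ≤ t ^ (-(3:ℝ)/4) := (Real.rpow_pos_of_pos ht _).le
      have heq : (1 + t) ^ (-(3/4) : ℝ) = (1 + t) ^ (-(3:ℝ)/4) := by norm_num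
      rw [heq]
      nlinarith
    have hpos : 0 ≤ (1 + t) ^ (-(3/4) : ℝ) := (Real.rpow_pos_of_pos (by linarith) _).le
    calc ∫ k in (0:ℝ)..Real.pi, E t k * Real.sqrt |k| ≤ 9 * t ^ (-(3:ℝ)/4) := hbound
      _ ≤ 18 * (1 + t) ^ (-(3/4) : ℝ) := by nlinarith
      _ ≤ 20 * (1 + t) ^ (-(3/4) : ℝ) := by nlinarith

end HKaux

theorem heatKernel_spatial_holder :
    ∃ C : ℝ, 0 < C ∧
      ∀ (j₁ j₂ : ℤ) (t : ℝ), 0 < t →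
        |heatKernel j₂ t - heatKernel j₁ t| ≤
          C * (1 + t) ^ (-(3 / 4) : ℝ) * |(j₂ : ℝ) - (j₁ : ℝ)| ^ ((1 : ℝ) / 2) := by
  refine ⟨10, by norm_num, ?_⟩
  intro j₁ j₂ t ht
  set Δ : ℝ := (j₂ : ℝ) - (j₁ : ℝ) with hΔ
  rw [show |Δ| ^ ((1:ℝ)/2) = Real.sqrt |Δ| from (Real.sqrt_eq_rpow _).symm]
  have hcont : ∀ j : ℤ, Continuous fun k : ℝ =>
      Real.exp (-(2 * (1 - Real.cos k)) * t) * Real.cos ((j : ℝ) * k) := by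
    intro j; fun_prop
  have hD : heatKernel j₂ t - heatKernel j₁ t
      = (1 / (2 * Real.pi)) *
        ∫ k in (-Real.pi)..Real.pi,
          HKaux.E t k * (Real.cos ((j₂ : ℝ) * k) - Real.cos ((j₁ : ℝ) * k)) := by
    unfold heatKernel
    rw [← mul_sub, ← intervalIntegral.integral_sub
      ((hcont j₂).intervalIntegrable _ _) ((hcont j₁).intervalIntegrable _ _)]
    congr 1
    apply intervalIntegral.integral_congr
    intro x _
    simp only [HKaux.E]
    ring
  have habs : |heatKernel j₂ t - heatKernel j₁ t|
      ≤ (1 / (2 * Real.pi)) *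
        ∫ k in (-Real.pi)..Real.pi,
          |HKaux.E t k * (Real.cos ((j₂ : ℝ) * k) - Real.cos ((j₁ : ℝ) * k))| := by
    rw [hD, abs_mul, abs_of_pos (by positivity : (0:ℝ) < 1 / (2 * Real.pi))]
    exact mul_le_mul_of_nonneg_left
      (intervalIntegral.abs_integral_le_integral_abs (by linarith [Real.pi_pos]))
      (by positivity)
  have hpw : ∀ x ∈ Set.Icc (-Real.pi) Real.pi,
      |HKaux.E t x * (Real.cos ((j₂ : ℝ) * x) - Real.cos ((j₁ : ℝ) * x))|
        ≤ (Real.sqrt 2 * Real.sqrt |Δ|) * (HKaux.E t x * Real.sqrt |x|) := by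
    intro x _
    rw [abs_mul, abs_of_pos (HKaux.E_pos t x)]
    have h1 : |Real.cos ((j₂ : ℝ) * x) - Real.cos ((j₁ : ℝ) * x)|
        ≤ Real.sqrt 2 * Real.sqrt |(j₂ : ℝ) * x - (j₁ : ℝ) * x| :=
      HKaux.abs_cos_sub_cos_le _ _
    have h2 : |(j₂ : ℝ) * x - (j₁ : ℝ) * x| = |Δ| * |x| := by
      rw [show (j₂ : ℝ) * x - (j₁ : ℝ) * x = Δ * x by rw [hΔ]; ring, abs_mul]
    rw [h2, Real.sqrt_mul (abs_nonneg _)] at h1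
    have hE := (HKaux.E_pos t x).le
    calc HKaux.E t x * |Real.cos ((j₂ : ℝ) * x) - Real.cos ((j₁ : ℝ) * x)|
        ≤ HKaux.E t x * (Real.sqrt 2 * (Real.sqrt |Δ| * Real.sqrt |x|)) :=
          mul_le_mul_of_nonneg_left h1 hE
      _ = (Real.sqrt 2 * Real.sqrt |Δ|) * (HKaux.E t x * Real.sqrt |x|) := by ring
  have hcont2 : Continuous fun x : ℝ =>
      HKaux.E t x * (Real.cos ((j₂ : ℝ) * x) - Real.cos ((j₁ : ℝ) * x)) :=
    (HKaux.E_cont t).mul (by fun_prop)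
  have hint1 := hcont2.abs.intervalIntegrable (μ := volume) (-Real.pi) Real.pi
  have hint2 : IntervalIntegrable
      (fun x => (Real.sqrt 2 * Real.sqrt |Δ|) * (HKaux.E t x * Real.sqrt |x|)) volume
      (-Real.pi) Real.pi :=
    (continuous_const.mul (HKaux.f_cont t)).intervalIntegrable _ _
  have hmono2 : (∫ x in (-Real.pi)..Real.pi,
        |HKaux.E t x * (Real.cos ((j₂ : ℝ) * x) - Real.cos ((j₁ : ℝ) * x))|)
      ≤ ∫ x in (-Real.pi)..Real.pi,
        (Real.sqrt 2 * Real.sqrt |Δ|) * (HKaux.E t x * Real.sqrt |x|) :=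
    intervalIntegral.integral_mono_on (by linarith [Real.pi_pos]) hint1 hint2 hpw
  have hconst : (∫ x in (-Real.pi)..Real.pi,
        (Real.sqrt 2 * Real.sqrt |Δ|) * (HKaux.E t x * Real.sqrt |x|))
      = (Real.sqrt 2 * Real.sqrt |Δ|) *
        ∫ x in (-Real.pi)..Real.pi, HKaux.E t x * Real.sqrt |x| :=
    intervalIntegral.integral_const_mul _ _
  have hhalf : (∫ x in (-Real.pi)..(0:ℝ), HKaux.E t x * Real.sqrt |x|)
      = ∫ x in (0:ℝ)..Real.pi, HKaux.E t x * Real.sqrt |x| := by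
    have heq : Set.EqOn (fun x : ℝ => HKaux.E t (-x) * Real.sqrt |(-x)|)
        (fun x => HKaux.E t x * Real.sqrt |x|) (Set.uIcc (0:ℝ) Real.pi) := by
      intro x _
      simp [HKaux.E, Real.cos_neg, abs_neg]
    calc (∫ x in (-Real.pi)..(0:ℝ), HKaux.E t x * Real.sqrt |x|)
        = ∫ x in (0:ℝ)..Real.pi, HKaux.E t (-x) * Real.sqrt |(-x)| := by
          rw [intervalIntegral.integral_comp_neg (fun x => HKaux.E t x * Real.sqrt |x|)]
          norm_num
      _ = ∫ x in (0:ℝ)..Real.pi, HKaux.E t x * Real.sqrt |x| :=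
          intervalIntegral.integral_congr heq
  have hsplit2 : (∫ x in (-Real.pi)..Real.pi, HKaux.E t x * Real.sqrt |x|)
      = (∫ x in (-Real.pi)..(0:ℝ), HKaux.E t x * Real.sqrt |x|)
        + ∫ x in (0:ℝ)..Real.pi, HKaux.E t x * Real.sqrt |x| :=
    (intervalIntegral.integral_add_adjacent_intervals
      ((HKaux.f_cont t).intervalIntegrable _ _) ((HKaux.f_cont t).intervalIntegrable _ _)).symm
  have hkey := HKaux.key ht
  have h40 : (∫ x in (-Real.pi)..Real.pi, HKaux.E t x * Real.sqrt |x|)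
      ≤ 40 * (1 + t) ^ (-(3/4) : ℝ) := by
    rw [hsplit2, hhalf]; linarith
  have hP : (0:ℝ) ≤ (1 + t) ^ (-(3/4) : ℝ) := (Real.rpow_pos_of_pos (by linarith) _).le
  have hs2 : Real.sqrt 2 ≤ 1.5 := by
    rw [show (1.5:ℝ) = Real.sqrt (1.5 ^ 2) by rw [Real.sqrt_sq (by norm_num)]]
    exact Real.sqrt_le_sqrt (by norm_num)
  have hsΔ : (0:ℝ) ≤ Real.sqrt |Δ| := Real.sqrt_nonneg _
  have hs2n : (0:ℝ) ≤ Real.sqrt 2 := Real.sqrt_nonneg _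
  have hintnn : (0:ℝ) ≤ ∫ x in (-Real.pi)..Real.pi, HKaux.E t x * Real.sqrt |x| := by
    apply intervalIntegral.integral_nonneg (by linarith [Real.pi_pos])
    intro x _
    exact mul_nonneg (HKaux.E_pos t x).le (Real.sqrt_nonneg _)
  have hfrac : (1:ℝ) / (2 * Real.pi) ≤ 1 / 6 := by
    rw [div_le_div_iff₀ (by positivity) (by norm_num)]
    nlinarith [Real.pi_gt_three]
  calc |heatKernel j₂ t - heatKernel j₁ t|
      ≤ (1 / (2 * Real.pi)) *
        ∫ k in (-Real.pi)..Real.pi,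
          |HKaux.E t k * (Real.cos ((j₂ : ℝ) * k) - Real.cos ((j₁ : ℝ) * k))| := habs
    _ ≤ (1 / (2 * Real.pi)) * ((Real.sqrt 2 * Real.sqrt |Δ|) *
          ∫ x in (-Real.pi)..Real.pi, HKaux.E t x * Real.sqrt |x|) := by
        rw [← hconst]
        exact mul_le_mul_of_nonneg_left hmono2 (by positivity)
    _ ≤ (1 / 6) * ((Real.sqrt 2 * Real.sqrt |Δ|) * (40 * (1 + t) ^ (-(3/4) : ℝ))) := by
        have hX : (Real.sqrt 2 * Real.sqrt |Δ|) *
            (∫ x in (-Real.pi)..Real.pi, HKaux.E t x * Real.sqrt |x|)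
            ≤ (Real.sqrt 2 * Real.sqrt |Δ|) * (40 * (1 + t) ^ (-(3/4) : ℝ)) :=
          mul_le_mul_of_nonneg_left h40 (by positivity)
        have hXnn : (0:ℝ) ≤ (Real.sqrt 2 * Real.sqrt |Δ|) *
            (∫ x in (-Real.pi)..Real.pi, HKaux.E t x * Real.sqrt |x|) := by positivity
        nlinarith
    _ ≤ 10 * (1 + t) ^ (-(3/4) : ℝ) * Real.sqrt |Δ| := by
        nlinarith [mul_nonneg hsΔ hP]
end

section
/- The hysteresis flow rule follows from the entropy inequalities: if (U, P, ξ*) satisfies the Stefan condition ⟦P⟧ = 0 and (dξ*/dτ)⟦U⟧ + ⟦∂_ξ P⟧ = 0 together with the family of entropy inequalities (dξ*/dτ)(⟦Ψ(U)⟧ - Υ(P)⟦U⟧) ≤ 0 for all increasing functions Υ with Ψ' = Υ∘Φ', and if U_- > u^* > u_* > U_+ with P_- = P_+ = P, then: dξ*/dτ > 0 forces P = p* and dξ*/dτ < 0 forces P = p_*, where p_* = Φ'(u^*) and p* = Φ'(u_*). -/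
open Real MeasureTheory intervalIntegral

/-- Piecewise-linear increasing ramp: `0` for `p ≤ c`, `1` for `p ≥ d`. -/
noncomputable def entramp (c d p : ℝ) : ℝ := max 0 (min 1 ((p - c) / (d - c)))

lemma entramp_nonneg (c d p : ℝ) : 0 ≤ entramp c d p := le_max_left _ _

lemma entramp_le_one (c d p : ℝ) : entramp c d p ≤ 1 :=
  max_le zero_le_one (min_le_left _ _)

lemma entramp_mono (c d : ℝ) (h : c < d) : Monotone (entramp c d) := by
  intro x y hxy
  have : (x - c) / (d - c) ≤ (y - c) / (d - c) :=
    div_le_div_of_nonneg_right (by linarith) (by linarith) |>.trans_eq rfl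
  exact max_le_max le_rfl (min_le_min le_rfl this)

lemma entramp_continuous (c d : ℝ) : Continuous (entramp c d) := by
  unfold entramp
  fun_prop

lemma entramp_eq_zero (c d p : ℝ) (h : c < d) (hp : p ≤ c) : entramp c d p = 0 := by
  unfold entramp
  have : (p - c) / (d - c) ≤ 0 := div_nonpos_of_nonpos_of_nonneg (by linarith) (by linarith)
  rw [max_eq_left]
  exact le_trans (min_le_right _ _) this

lemma entramp_eq_one (c d p : ℝ) (h : c < d) (hp : d ≤ p) : entramp c d p = 1 := by
  unfold entramp
  have h1 : (1:ℝ) ≤ (p - c) / (d - c) := by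
    rw [le_div_iff₀ (by linarith)]; linarith
  rw [min_eq_left h1, max_eq_right zero_le_one]

/-- If a continuous nonnegative function is `≥ 1` on `[x-θ, x+θ] ⊆ [a,b]`, its integral
over `a..b` is at least `2θ`. -/
lemma integral_ge_two_theta (f : ℝ → ℝ) (hf : Continuous f) (a b x θ : ℝ)
    (h1 : a ≤ x - θ) (h2 : x + θ ≤ b) (hθ : 0 < θ)
    (hnn : ∀ s, 0 ≤ f s) (hone : ∀ s ∈ Set.Icc (x - θ) (x + θ), 1 ≤ f s) :
    2 * θ ≤ ∫ s in a..b, f s := by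
  have hint : ∀ u v : ℝ, IntervalIntegrable f volume u v := fun u v =>
    hf.intervalIntegrable u v
  have e1 : (∫ s in a..(x - θ), f s) + (∫ s in (x - θ)..b, f s) = ∫ s in a..b, f s :=
    integral_add_adjacent_intervals (hint _ _) (hint _ _)
  have e2 : (∫ s in (x - θ)..(x + θ), f s) + (∫ s in (x + θ)..b, f s)
      = ∫ s in (x - θ)..b, f s :=
    integral_add_adjacent_intervals (hint _ _) (hint _ _)
  have hnn1 : 0 ≤ ∫ s in a..(x - θ), f s :=
    integral_nonneg h1 (fun s _ => hnn s)
  have hnn2 : 0 ≤ ∫ s in (x + θ)..b, f s :=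
    integral_nonneg h2 (fun s _ => hnn s)
  have hmid : 2 * θ ≤ ∫ s in (x - θ)..(x + θ), f s := by
    have h := integral_mono_on (μ := volume) (f := fun _ => (1:ℝ)) (g := f)
      (a := x - θ) (b := x + θ) (by linarith) intervalIntegrable_const (hint _ _) hone
    rwa [intervalIntegral.integral_const, smul_eq_mul, mul_one,
      show x + θ - (x - θ) = 2 * θ by ring] at h
  linarith

/-- Near a point where a continuous function exceeds (resp. is below) a threshold, we can
find a symmetric closed interval inside `[a,b]` where it does. -/
lemma exists_theta (g : ℝ → ℝ) (hg : Continuous g) (x a b d : ℝ)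
    (ha : a < x) (hb : x < b) (hx : x ∈ {s : ℝ | d < g s}) :
    ∃ θ : ℝ, 0 < θ ∧ a ≤ x - θ ∧ x + θ ≤ b ∧
      ∀ s ∈ Set.Icc (x - θ) (x + θ), d < g s := by
  have hopen : IsOpen {s : ℝ | d < g s} := isOpen_lt continuous_const hg
  obtain ⟨δ, hδ, hball⟩ := Metric.isOpen_iff.1 hopen x hx
  set θ := min (δ / 2) (min (x - a) (b - x)) with hθdef
  have hθ1 : θ ≤ δ / 2 := min_le_left _ _
  have hθ2 : θ ≤ x - a := le_trans (min_le_right _ _) (min_le_left _ _)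
  have hθ3 : θ ≤ b - x := le_trans (min_le_right _ _) (min_le_right _ _)
  have hθpos : 0 < θ := lt_min (by linarith) (lt_min (by linarith) (by linarith))
  refine ⟨θ, hθpos, by linarith, by linarith, ?_⟩
  intro s hs
  apply hball
  rw [Metric.mem_ball, Real.dist_eq, abs_lt]
  obtain ⟨hs1, hs2⟩ := hs
  constructor <;> linarith

/-- The hysteretic flow rule follows from the generalized Stefan condition and the
family of entropy inequalities (§2.4). Here `Dphi = Φ'` is the bistable derivative of a
double-well potential with spinodal interval `[ustar, ustarU] = [u_*, u^*]`,
`p_* = Φ'(u^*)` and `p^* = Φ'(u_*)`, and `V = dξ*/dτ` is the interface velocity. -/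
theorem flow_rule_from_entropy
    (Dphi : ℝ → ℝ) (ustar ustarU : ℝ) (hlt : ustar < ustarU)
    (hmono₁ : StrictMonoOn Dphi (Set.Iic ustar))
    (hmono₂ : StrictMonoOn Dphi (Set.Ici ustarU))
    (hanti : StrictAntiOn Dphi (Set.Icc ustar ustarU))
    (hcont : Continuous Dphi)
    (V Uminus Uplus P dPjump : ℝ)
    (hU₁ : ustarU < Uminus) (hU₂ : Uplus < ustar)
    (hPp : Dphi Uplus = P) (hPm : Dphi Uminus = P)
    (hStefan : V * (Uminus - Uplus) + dPjump = 0)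
    (hentropy : ∀ Υ Ψ : ℝ → ℝ, StrictMono Υ →
      (∀ s : ℝ, HasDerivAt Ψ (Υ (Dphi s)) s) →
      V * ((Ψ Uminus - Ψ Uplus) - Υ P * (Uminus - Uplus)) ≤ 0) :
    (0 < V → P = Dphi ustar) ∧ (V < 0 → P = Dphi ustarU) := by
  have hPlt : P < Dphi ustar := by
    rw [← hPp]
    exact hmono₁ (Set.mem_Iic.2 (le_of_lt hU₂)) (Set.mem_Iic.2 le_rfl) hU₂
  have hPgt : Dphi ustarU < P := by
    rw [← hPm]
    exact hmono₂ (Set.mem_Ici.2 le_rfl) (Set.mem_Ici.2 (le_of_lt hU₁)) hU₁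
  have hab : Uplus < Uminus := by linarith
  -- the entropy inequality in integral form, for `Υ p = ε p + entramp c d p`
  have key : ∀ ε c d : ℝ, 0 < ε → c < d →
      V * (∫ s in Uplus..Uminus,
        (ε * Dphi s + entramp c d (Dphi s) - (ε * P + entramp c d P))) ≤ 0 := by
    intro ε c d hε hcd
    set Υ : ℝ → ℝ := fun p => ε * p + entramp c d p with hΥ
    have hΥmono : StrictMono Υ := by
      intro x y hxy
      have h1 := entramp_mono c d hcd (le_of_lt hxy)
      have h2 : ε * x < ε * y := (mul_lt_mul_iff_right₀ hε).2 hxy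
      simp only [hΥ]
      linarith
    have hcomp : Continuous (fun s => Υ (Dphi s)) := by
      apply Continuous.add (continuous_const.mul hcont)
      exact (entramp_continuous c d).comp hcont
    set Ψ : ℝ → ℝ := fun x => ∫ t in (0:ℝ)..x, Υ (Dphi t) with hΨ
    have hΨderiv : ∀ s : ℝ, HasDerivAt Ψ (Υ (Dphi s)) s := fun s =>
      intervalIntegral.integral_hasDerivAt_right
        (hcomp.intervalIntegrable _ _)
        (hcomp.stronglyMeasurableAtFilter _ _)
        hcomp.continuousAt
    have hE := hentropy Υ Ψ hΥmono hΨderiv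
    have hdiff : Ψ Uminus - Ψ Uplus = ∫ s in Uplus..Uminus, Υ (Dphi s) := by
      simp only [hΨ]
      rw [← intervalIntegral.integral_add_adjacent_intervals
        (hcomp.intervalIntegrable 0 Uplus) (hcomp.intervalIntegrable Uplus Uminus)]
      ring
    have hconst : Υ P * (Uminus - Uplus) = ∫ _ in Uplus..Uminus, Υ P := by
      rw [intervalIntegral.integral_const, smul_eq_mul]; ring
    rw [hdiff, hconst, ← intervalIntegral.integral_sub (hcomp.intervalIntegrable _ _)
      intervalIntegrable_const] at hE
    exact hE
  set I0 : ℝ := ∫ s in Uplus..Uminus, (Dphi s - P) with hI0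
  set ε : ℝ := (min (ustar - Uplus) 1) / (|I0| + 1) with hεdef
  have habs : (0:ℝ) ≤ |I0| := abs_nonneg _
  constructor
  · -- V > 0 is impossible
    intro hV
    exfalso
    set pstar := Dphi ustar with hps
    set c := P + (pstar - P) / 3 with hc
    set d := P + 2 * (pstar - P) / 3 with hd
    have hcd : c < d := by rw [hc, hd]; linarith
    have hPc : P ≤ c := by rw [hc]; linarith
    have hdps : d < pstar := by rw [hd]; linarith
    obtain ⟨θ, hθpos, hθ1, hθ2, hθd⟩ := exists_theta Dphi hcont ustar Uplus Uminus d
      hU₂ (by linarith) hdps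
    -- integral of the ramp part is at least 2θ
    have hramp : 2 * θ ≤ ∫ s in Uplus..Uminus, entramp c d (Dphi s) :=
      integral_ge_two_theta (fun s => entramp c d (Dphi s)) ((entramp_continuous c d).comp' hcont)
        _ _ _ _ hθ1 hθ2 hθpos
        (fun s => entramp_nonneg _ _ _)
        (fun s hs => le_of_eq (entramp_eq_one c d _ hcd (le_of_lt (hθd s hs))).symm)
    -- choose ε adapted to θ
    set ε' : ℝ := θ / (|I0| + 1) with hε'
    have hε'pos : 0 < ε' := div_pos hθpos (by linarith)
    have hεI : ε' * (|I0| + 1) = θ := div_mul_cancel₀ _ (by linarith)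
    have hkey := key ε' c d hε'pos hcd
    -- rewrite the integrand
    have hfun : (fun s => ε' * Dphi s + entramp c d (Dphi s) - (ε' * P + entramp c d P))
        = fun s => ε' * (Dphi s - P) + entramp c d (Dphi s) := by
      funext s
      rw [entramp_eq_zero c d P hcd hPc]
      ring
    rw [hfun] at hkey
    have hsplit : (∫ s in Uplus..Uminus, (ε' * (Dphi s - P) + entramp c d (Dphi s)))
        = ε' * I0 + ∫ s in Uplus..Uminus, entramp c d (Dphi s) := by
      rw [intervalIntegral.integral_add (f := fun s => ε' * (Dphi s - P))
        (g := fun s => entramp c d (Dphi s))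
        (Continuous.intervalIntegrable (continuous_const.mul (hcont.sub continuous_const)) _ _)
        (Continuous.intervalIntegrable ((entramp_continuous c d).comp' hcont) _ _),
        intervalIntegral.integral_const_mul]
    rw [hsplit] at hkey
    -- ε' * I0 ≥ -θ
    have hlow : -θ ≤ ε' * I0 := by
      have h1 : ε' * (-|I0|) ≤ ε' * I0 :=
        mul_le_mul_of_nonneg_left (neg_abs_le I0) (le_of_lt hε'pos)
      nlinarith
    nlinarith
  · -- V < 0 is impossible
    intro hV
    exfalso
    set plow := Dphi ustarU with hpl
    set c := plow + (P - plow) / 3 with hc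
    set d := plow + 2 * (P - plow) / 3 with hd
    have hcd : c < d := by rw [hc, hd]; linarith
    have hdP : d ≤ P := by rw [hd]; linarith
    have hcpl : plow < c := by rw [hc]; linarith
    obtain ⟨θ, hθpos, hθ1, hθ2, hθd⟩ := exists_theta (fun s => -Dphi s) (hcont.neg)
      ustarU Uplus Uminus (-c) (by linarith) hU₁ (by simpa using hcpl)
    -- integral of the reversed ramp part is at least 2θ
    have hramp : 2 * θ ≤ ∫ s in Uplus..Uminus, (1 - entramp c d (Dphi s)) :=
      integral_ge_two_theta (fun s => 1 - entramp c d (Dphi s))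
        (continuous_const.sub ((entramp_continuous c d).comp' hcont)) _ _ _ _ hθ1 hθ2 hθpos
        (fun s => by
          show (0:ℝ) ≤ 1 - entramp c d (Dphi s)
          linarith [entramp_le_one c d (Dphi s)])
        (fun s hs => by
          have hlt : Dphi s < c := by have := hθd s hs; simpa using this
          show (1:ℝ) ≤ 1 - entramp c d (Dphi s)
          rw [entramp_eq_zero c d _ hcd (le_of_lt hlt)]; norm_num)
    set ε' : ℝ := θ / (|I0| + 1) with hε'
    have hε'pos : 0 < ε' := div_pos hθpos (by linarith)
    have hεI : ε' * (|I0| + 1) = θ := div_mul_cancel₀ _ (by linarith)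
    have hkey := key ε' c d hε'pos hcd
    have hfun : (fun s => ε' * Dphi s + entramp c d (Dphi s) - (ε' * P + entramp c d P))
        = fun s => ε' * (Dphi s - P) - (1 - entramp c d (Dphi s)) := by
      funext s
      rw [entramp_eq_one c d P hcd hdP]
      ring
    rw [hfun] at hkey
    have hsplit : (∫ s in Uplus..Uminus, (ε' * (Dphi s - P) - (1 - entramp c d (Dphi s))))
        = ε' * I0 - ∫ s in Uplus..Uminus, (1 - entramp c d (Dphi s)) := by
      rw [intervalIntegral.integral_sub (f := fun s => ε' * (Dphi s - P))
        (g := fun s => 1 - entramp c d (Dphi s))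
        (Continuous.intervalIntegrable (continuous_const.mul (hcont.sub continuous_const)) _ _)
        (Continuous.intervalIntegrable (continuous_const.sub ((entramp_continuous c d).comp' hcont)) _ _),
        intervalIntegral.integral_const_mul]
    rw [hsplit] at hkey
    have hhigh : ε' * I0 ≤ θ := by
      have h1 : ε' * I0 ≤ ε' * |I0| :=
        mul_le_mul_of_nonneg_left (le_abs_self I0) (le_of_lt hε'pos)
      nlinarith
    nlinarith
end
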